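/- arXiv:cs/0106050 — 4 statements merged into one kernel-verified Lean document; each statement's English description precedes it below -/
import Mathlib

section
/- If a program P and query Q are acceptable by an extended level mapping |·| and a Herbrand model I, then P and Q are fair-bounded by |·| and I. -/
/-- A ground clause instance: head together with list of body atoms. -/
abbrev GClause (Atom : Type) := Atom × List Atom

/-- A Herbrand interpretation I is a model of the set of ground clause instances P. -/
def IsModel {Atom : Type} (P : Set (GClause Atom)) (I : Set Atom) : Prop :=
  ∀ c ∈ P, (∀ B ∈ c.2, B ∈ I) → c.1 ∈ I

/-- n ⊳ m on ℕ∞: n = ∞ or (n, m finite and n > m). -/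
def tri (n m : WithTop ℕ) : Prop :=
  n = ⊤ ∨ ∃ a b : ℕ, n = (a : WithTop ℕ) ∧ m = (b : WithTop ℕ) ∧ b < a

/-- P is acceptable by the extended level mapping ℓ and interpretation I. -/
def AcceptableProg {Atom : Type} (P : Set (GClause Atom)) (ℓ : Atom → WithTop ℕ)
    (I : Set Atom) : Prop :=
  IsModel P I ∧ ∀ c ∈ P, ∀ (i : ℕ) (h : i < c.2.length),
    (∀ B ∈ c.2.take i, B ∈ I) → tri (ℓ c.1) (ℓ (c.2.get ⟨i, h⟩))

/-- The query Q is acceptable by ℓ and I. -/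
def AcceptableQuery {Atom : Type} (Q : Set (List Atom)) (ℓ : Atom → WithTop ℕ)
    (I : Set Atom) : Prop :=
  ∃ k : ℕ, ∀ q ∈ Q, ∀ (i : ℕ) (h : i < q.length),
    (∀ B ∈ q.take i, B ∈ I) → tri (k : WithTop ℕ) (ℓ (q.get ⟨i, h⟩))

/-- P is fair-bounded by ℓ and I. -/
def FairBoundedProg {Atom : Type} (P : Set (GClause Atom)) (ℓ : Atom → WithTop ℕ)
    (I : Set Atom) : Prop :=
  IsModel P I ∧ ∀ c ∈ P,
    ((∀ B ∈ c.2, B ∈ I) → ∀ B ∈ c.2, tri (ℓ c.1) (ℓ B)) ∧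
    ((¬ ∀ B ∈ c.2, B ∈ I) → ∃ B ∈ c.2, B ∉ I ∧ tri (ℓ c.1) (ℓ B))

/-- The query Q is fair-bounded by ℓ and I. -/
def FairBoundedQuery {Atom : Type} (Q : Set (List Atom)) (ℓ : Atom → WithTop ℕ)
    (I : Set Atom) : Prop :=
  ∃ k : ℕ, ∀ q ∈ Q,
    ((∀ A ∈ q, A ∈ I) → ∀ A ∈ q, tri (k : WithTop ℕ) (ℓ A)) ∧
    ((¬ ∀ A ∈ q, A ∈ I) → ∃ A ∈ q, A ∉ I ∧ tri (k : WithTop ℕ) (ℓ A))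

lemma tri_helper {Atom : Type} (ℓ : Atom → WithTop ℕ) (I : Set Atom) (v : WithTop ℕ) :
    ∀ l : List Atom,
      (∀ (i : ℕ) (h : i < l.length), (∀ B ∈ l.take i, B ∈ I) → tri v (ℓ (l.get ⟨i, h⟩))) →
      ((∀ B ∈ l, B ∈ I) → ∀ B ∈ l, tri v (ℓ B)) ∧
      ((¬ ∀ B ∈ l, B ∈ I) → ∃ B ∈ l, B ∉ I ∧ tri v (ℓ B)) := by
  intro l
  induction l with
  | nil =>
    intro _
    exact ⟨fun _ B hB => absurd hB List.not_mem_nil,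
           fun h => absurd (fun B hB => absurd hB List.not_mem_nil) h⟩
  | cons a t ih =>
    intro h
    have ha : tri v (ℓ a) := h 0 (Nat.succ_pos _) (by simp)
    by_cases haI : a ∈ I
    · have ht : ∀ (i : ℕ) (hi : i < t.length),
          (∀ B ∈ t.take i, B ∈ I) → tri v (ℓ (t.get ⟨i, hi⟩)) := by
        intro i hi hpre
        have := h (i + 1) (Nat.succ_lt_succ hi) (by
          intro B hB
          simp only [List.take_succ_cons, List.mem_cons] at hB
          rcases hB with rfl | hB
          · exact haI
          · exact hpre B hB)
        simpa using this
      obtain ⟨h1, h2⟩ := ih ht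
      constructor
      · intro hall B hB
        rcases List.mem_cons.mp hB with rfl | hB
        · exact ha
        · exact h1 (fun B hB => hall B (List.mem_cons_of_mem _ hB)) B hB
      · intro hnot
        have hnot' : ¬ ∀ B ∈ t, B ∈ I := by
          intro hall
          exact hnot (fun B hB => by
            rcases List.mem_cons.mp hB with rfl | hB
            · exact haI
            · exact hall B hB)
        obtain ⟨B, hBt, hBI, hBtri⟩ := h2 hnot'
        exact ⟨B, List.mem_cons_of_mem _ hBt, hBI, hBtri⟩
    · constructor
      · intro hall B hB
        exact absurd (hall a (List.mem_cons_self)) haI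
      · intro _
        exact ⟨a, List.mem_cons_self, haI, ha⟩

/-- If P and Q are acceptable by an extended level mapping ℓ and a Herbrand model I,
then P and Q are fair-bounded by ℓ and I. -/
theorem stmt8 {Atom : Type} (P : Set (GClause Atom)) (Q : Set (List Atom))
    (ℓ : Atom → WithTop ℕ) (I : Set Atom)
    (hP : AcceptableProg P ℓ I) (hQ : AcceptableQuery Q ℓ I) :
    FairBoundedProg P ℓ I ∧ FairBoundedQuery Q ℓ I := by
  obtain ⟨hM, hA⟩ := hP
  obtain ⟨k, hk⟩ := hQ
  exact ⟨⟨hM, fun c hc => tri_helper ℓ I (ℓ c.1) c.2 (hA c hc)⟩,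
         ⟨k, fun q hq => tri_helper ℓ I (k : WithTop ℕ) q (hk q hq)⟩⟩
end

section
/- Let e be a finite directed acyclic graph on ground terms (represented as a list of arcs), and write x ⇝ₑ v for reachability by a nonempty path. If arc(x,z) is in e, then the set {v : z ⇝ₑ v} is a strict subset of {v : x ⇝ₑ v}; consequently Card{v : x ⇝ₑ v} > Card{v : z ⇝ₑ v}, where v ranges over the finitely many nodes occurring in e. -/
/-- x ⇝ₑ v: reachability by a nonempty directed path using the arcs of e. -/
def Reach {α : Type} (e : List (α × α)) : α → α → Prop :=
  Relation.TransGen (fun a b => (a, b) ∈ e)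

/-- If e is a DAG (no directed cycle) and arc(x,z) ∈ e, then the set of terms reachable
from z is a strict subset of the set reachable from x, and has strictly smaller
cardinality. -/
theorem stmt14 {α : Type} (e : List (α × α))
    (hacyc : ∀ a : α, ¬ Reach e a a)
    (x z : α) (hxz : (x, z) ∈ e) :
    {v | Reach e z v} ⊂ {v | Reach e x v} ∧
    ({v | Reach e z v}).ncard < ({v | Reach e x v}).ncard := by
  have hsub : {v | Reach e z v} ⊆ {v | Reach e x v} := fun v hv =>
    Relation.TransGen.head hxz hv
  have hz : z ∈ {v | Reach e x v} := Relation.TransGen.single hxz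
  have hznot : z ∉ {v | Reach e z v} := hacyc z
  have hssub : {v | Reach e z v} ⊂ {v | Reach e x v} :=
    ⟨hsub, fun h => hznot (h hz)⟩
  refine ⟨hssub, ?_⟩
  have hfin : {v | Reach e x v}.Finite := by
    have : {v | Reach e x v} ⊆ {v | v ∈ e.map Prod.snd} := by
      intro v hv
      induction hv with
      | single h => exact List.mem_map.mpr ⟨_, h, rfl⟩
      | tail _ h _ => exact List.mem_map.mpr ⟨_, h, rfl⟩
    exact Set.Finite.subset (e.map Prod.snd).finite_toSet this
  exact Set.ncard_lt_ncard hssub hfin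
end

section
/- The TRANSP program is acceptable by the extended level mapping |trans(x,y,e)| = |e| + 1 + Card{v : x ⇝ₑ v} if e is a DAG and ∞ otherwise, |member(x,e)| = |e|, together with the Herbrand model I = { trans(x,y,e) : any x,y,e } ∪ { member(x,e) : x is an element of the list e }. In particular, for every ground instance trans(x,y,e) ← member(arc(x,z),e), trans(z,y,e): (i) |trans(x,y,e)| ⊳ |member(arc(x,z),e)|; (ii) if arc(x,z) is an element of e then |trans(x,y,e)| ⊳ |trans(z,y,e)|. -/
/-- e is a DAG: no directed cycle. -/
def IsDag {α : Type} (e : List (α × α)) : Prop := ∀ a : α, ¬ Reach e a a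

/-- Ground atoms of TRANSP: trans(x,y,e) and member(arc, e), where a graph e is
represented as a list of arcs. -/
inductive TAtom (α : Type) where
  | trans : α → α → List (α × α) → TAtom α
  | mem : α × α → List (α × α) → TAtom α

/-- I = { trans(x,y,e) : any x,y,e } ∪ { member(x,e) : x is an element of the list e }. -/
def IT (α : Type) : Set (TAtom α) :=
  {a | match a with
       | .trans _ _ _ => True
       | .mem p e => p ∈ e}

open Classical in
/-- The extended level mapping: |trans(x,y,e)| = |e| + 1 + Card{v : x ⇝ₑ v} if e is a
DAG and ∞ otherwise; |member(x,e)| = |e|. -/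
noncomputable def lvl {α : Type} : TAtom α → WithTop ℕ
  | .trans x _ e =>
      if IsDag e then ((e.length + 1 + ({v | Reach e x v}).ncard : ℕ) : WithTop ℕ) else ⊤
  | .mem _ e => ((e.length : ℕ) : WithTop ℕ)

private lemma reach_snd {α : Type} {e : List (α × α)} {x v : α}
    (h : Relation.TransGen (fun a b => (a, b) ∈ e) x v) : v ∈ e.map Prod.snd := by
  induction h with
  | single h => exact List.mem_map.mpr ⟨(x, _), h, rfl⟩
  | tail _ h _ => exact List.mem_map.mpr ⟨(_, _), h, rfl⟩

private lemma reach_finite {α : Type} (e : List (α × α)) (x : α) :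
    {v | Reach e x v}.Finite := by
  apply Set.Finite.subset (List.finite_toSet (e.map Prod.snd))
  intro v hv
  exact reach_snd hv

private lemma card_lt {α : Type} {e : List (α × α)} {x z : α}
    (hd : IsDag e) (hxz : (x, z) ∈ e) :
    ({v | Reach e z v}).ncard < ({v | Reach e x v}).ncard := by
  apply Set.ncard_lt_ncard _ (reach_finite e x)
  constructor
  · intro v hv
    exact Relation.TransGen.head hxz hv
  · intro hsub
    exact hd z (hsub (Relation.TransGen.single hxz))

/-- TRANSP is acceptable by lvl and IT: IT is a Herbrand model of the four clauses,
and the required ⊳-decreases hold; in particular, for every ground instance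
trans(x,y,e) ← member(arc(x,z),e), trans(z,y,e):
(i) |trans(x,y,e)| ⊳ |member(arc(x,z),e)|, and
(ii) if arc(x,z) ∈ e then |trans(x,y,e)| ⊳ |trans(z,y,e)|. -/
theorem stmt15 {α : Type} :
    -- IT is a model of TRANSP:
    (∀ (x y : α) (e : List (α × α)),
      TAtom.mem (x, y) e ∈ IT α → TAtom.trans x y e ∈ IT α) ∧
    (∀ (x y z : α) (e : List (α × α)),
      TAtom.mem (x, z) e ∈ IT α → TAtom.trans z y e ∈ IT α → TAtom.trans x y e ∈ IT α) ∧
    (∀ (p : α × α) (xs : List (α × α)), TAtom.mem p (p :: xs) ∈ IT α) ∧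
    (∀ (p q : α × α) (xs : List (α × α)),
      TAtom.mem p xs ∈ IT α → TAtom.mem p (q :: xs) ∈ IT α) ∧
    -- acceptability decreases:
    (∀ (x y z : α) (e : List (α × α)),
      tri (lvl (TAtom.trans x y e)) (lvl (TAtom.mem (x, z) e))) ∧
    (∀ (x y z : α) (e : List (α × α)), (x, z) ∈ e →
      tri (lvl (TAtom.trans x y e)) (lvl (TAtom.trans z y e))) ∧
    (∀ (p q : α × α) (xs : List (α × α)),
      tri (lvl (TAtom.mem p (q :: xs))) (lvl (TAtom.mem p xs))) := by

  refine ⟨fun _ _ _ _ => trivial, fun _ _ _ _ _ _ => trivial,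
    fun p xs => List.mem_cons_self (a := p) (l := xs), fun p q xs h => List.mem_cons_of_mem q h,
    ?_, ?_, ?_⟩
  · intro x y z e
    by_cases hd : IsDag e
    · right
      exact ⟨e.length + 1 + ({v | Reach e x v}).ncard, e.length,
        by simp [lvl, hd], by simp [lvl], by omega⟩
    · left; simp [lvl, hd]
  · intro x y z e hxz
    by_cases hd : IsDag e
    · right
      refine ⟨e.length + 1 + ({v | Reach e x v}).ncard,
        e.length + 1 + ({v | Reach e z v}).ncard,
        by simp [lvl, hd], by simp [lvl, hd], ?_⟩
      have := card_lt hd hxz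
      omega
    · left; simp [lvl, hd]
  · intro p q xs
    right
    exact ⟨xs.length + 1, xs.length, by simp [lvl], by simp [lvl], by omega⟩
end

section
/- If P and Q are a permutation well moded program and query, then every query occurring in any SLD-derivation of P and Q is permutation well moded; consequently every nonempty such query contains an atom that is ground in its input positions. -/
/-- First-order terms over variables ℕ and function symbols. -/
inductive Trm where
  | var : ℕ → Trm
  | fn : String → List Trm → Trm

/-- The set of variables of a term. -/
def Trm.vars : Trm → Set ℕ
  | .var v => {v}
  | .fn _ args => (args.attach.map (fun ⟨t, _⟩ => t.vars)).foldr (· ∪ ·) ∅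

/-- Application of a substitution θ : Var → Trm to a term. -/
def Trm.subst (θ : ℕ → Trm) : Trm → Trm
  | .var v => θ v
  | .fn f args => .fn f (args.attach.map (fun ⟨t, _⟩ => t.subst θ))

/-- Variables of a list of terms. -/
def varsList (ts : List Trm) : Set ℕ := {v | ∃ t ∈ ts, v ∈ t.vars}

/-- A moded atom p(s,t): predicate symbol, input terms s and output terms t. -/
structure MAtom where
  pred : String
  inputs : List Trm
  outputs : List Trm

/-- Applying a substitution to an atom. -/
def MAtom.subst (θ : ℕ → Trm) (a : MAtom) : MAtom :=
  ⟨a.pred, a.inputs.map (Trm.subst θ), a.outputs.map (Trm.subst θ)⟩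

/-- Variables of an atom. -/
def varsAtom (a : MAtom) : Set ℕ := varsList a.inputs ∪ varsList a.outputs

/-- Variables of a query. -/
def varsQuery (q : List MAtom) : Set ℕ := {v | ∃ A ∈ q, v ∈ varsAtom A}

/-- A query p₁(s₁,t₁),…,pₙ(sₙ,tₙ) is well moded if for all i,
Vars(sᵢ) ⊆ ⋃_{j<i} Vars(tⱼ). -/
def WellModedQuery (q : List MAtom) : Prop :=
  ∀ (i : ℕ) (h : i < q.length),
    varsList (q.get ⟨i, h⟩).inputs ⊆
      {v | ∃ j : ℕ, ∃ hj : j < q.length, j < i ∧ v ∈ varsList (q.get ⟨j, hj⟩).outputs}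

/-- Permutation well moded query: well moded after some reordering of its atoms. -/
def PermWellModedQuery (q : List MAtom) : Prop :=
  ∃ q' : List MAtom, q.Perm q' ∧ WellModedQuery q'

/-- A clause: head and body. -/
structure MClause where
  head : MAtom
  body : List MAtom

/-- A clause p(t₀,s_{n+1}) ← body is well moded: each body atom's input variables are
among the head's input variables and the output variables of earlier body atoms, and
the head's output variables are among the head input variables and all body output
variables. -/
def WellModedClause (c : MClause) : Prop :=
  (∀ (i : ℕ) (h : i < c.body.length),
    varsList (c.body.get ⟨i, h⟩).inputs ⊆
      varsList c.head.inputs ∪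
        {v | ∃ j : ℕ, ∃ hj : j < c.body.length, j < i ∧
              v ∈ varsList (c.body.get ⟨j, hj⟩).outputs}) ∧
  varsList c.head.outputs ⊆
    varsList c.head.inputs ∪ {v | ∃ B ∈ c.body, v ∈ varsList B.outputs}

/-- Permutation well moded clause: well moded after some reordering of its body. -/
def PermWellModedClause (c : MClause) : Prop :=
  ∃ body' : List MAtom, c.body.Perm body' ∧ WellModedClause ⟨c.head, body'⟩

/-- Variables of a clause. -/
def varsClause (c : MClause) : Set ℕ :=
  varsAtom c.head ∪ {v | ∃ B ∈ c.body, v ∈ varsAtom B}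

/-- One SLD-resolution step of a query q using a (variable-disjoint variant of a)
clause of P: some atom of q is unified with the head of the clause by a unifying
substitution θ, and it is replaced by the instantiated clause body, instantiating the
whole resolvent by θ. -/
def Step (P : Set MClause) (q q' : List MAtom) : Prop :=
  ∃ c ∈ P, ∃ (θ : ℕ → Trm) (i : ℕ) (h : i < q.length),
    Disjoint (varsClause c) (varsQuery q) ∧
    (q.get ⟨i, h⟩).subst θ = c.head.subst θ ∧
    q' = (q.take i ++ c.body ++ q.drop (i + 1)).map (MAtom.subst θ)


lemma mem_foldr_union {α : Type*} (l : List (Set α)) (v : α) :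
    v ∈ l.foldr (· ∪ ·) ∅ ↔ ∃ s ∈ l, v ∈ s := by
  induction l with
  | nil => simp
  | cons s l ih => simp [ih]

lemma mem_vars_fn (f : String) (args : List Trm) (v : ℕ) :
    v ∈ (Trm.fn f args).vars ↔ ∃ t ∈ args, v ∈ t.vars := by
  rw [Trm.vars, mem_foldr_union]
  simp

lemma vars_subst (θ : ℕ → Trm) (t : Trm) :
    (t.subst θ).vars = {w | ∃ v ∈ t.vars, w ∈ (θ v).vars} := by
  induction t using Trm.subst.induct with
  | case1 v => ext w; simp [Trm.subst, Trm.vars]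
  | case2 f args ih =>
    ext w
    rw [Trm.subst, mem_vars_fn]
    constructor
    · rintro ⟨t', ht', hw⟩
      simp only [List.mem_map, List.mem_attach] at ht'
      obtain ⟨⟨t, ht⟩, -, rfl⟩ := ht'
      rw [ih t ht] at hw
      obtain ⟨v, hv, hw⟩ := hw
      exact ⟨v, (mem_vars_fn f args v).2 ⟨t, ht, hv⟩, hw⟩
    · rintro ⟨v, hv, hw⟩
      rw [mem_vars_fn] at hv
      obtain ⟨t, ht, hv⟩ := hv
      refine ⟨t.subst θ, ?_, ?_⟩
      · exact List.mem_map.2 ⟨⟨t, ht⟩, List.mem_attach _ _, rfl⟩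
      · rw [ih t ht]; exact ⟨v, hv, hw⟩

/-- Image of a variable set under a substitution. -/
def substVars (θ : ℕ → Trm) (S : Set ℕ) : Set ℕ := {w | ∃ v ∈ S, w ∈ (θ v).vars}

lemma substVars_mono (θ : ℕ → Trm) {S T : Set ℕ} (h : S ⊆ T) :
    substVars θ S ⊆ substVars θ T := by
  rintro w ⟨v, hv, hw⟩; exact ⟨v, h hv, hw⟩

lemma substVars_union (θ : ℕ → Trm) (S T : Set ℕ) :
    substVars θ (S ∪ T) = substVars θ S ∪ substVars θ T := by
  ext w
  constructor
  · rintro ⟨v, hv | hv, hw⟩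
    · exact Or.inl ⟨v, hv, hw⟩
    · exact Or.inr ⟨v, hv, hw⟩
  · rintro (⟨v, hv, hw⟩ | ⟨v, hv, hw⟩)
    · exact ⟨v, Or.inl hv, hw⟩
    · exact ⟨v, Or.inr hv, hw⟩

lemma substVars_empty (θ : ℕ → Trm) : substVars θ ∅ = ∅ := by
  ext w; simp [substVars]

lemma varsList_map (θ : ℕ → Trm) (ts : List Trm) :
    varsList (ts.map (Trm.subst θ)) = substVars θ (varsList ts) := by
  ext w
  constructor
  · rintro ⟨t', ht', hw⟩
    obtain ⟨t, ht, rfl⟩ := List.mem_map.1 ht'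
    rw [vars_subst] at hw
    obtain ⟨v, hv, hw⟩ := hw
    exact ⟨v, ⟨t, ht, hv⟩, hw⟩
  · rintro ⟨v, ⟨t, ht, hv⟩, hw⟩
    refine ⟨t.subst θ, List.mem_map.2 ⟨t, ht, rfl⟩, ?_⟩
    rw [vars_subst]; exact ⟨v, hv, hw⟩

/-- Output variables of a query. -/
def outs (q : List MAtom) : Set ℕ := {v | ∃ A ∈ q, v ∈ varsList A.outputs}

lemma outs_nil : outs [] = ∅ := by ext v; simp [outs]

lemma outs_cons (A : MAtom) (q : List MAtom) :
    outs (A :: q) = varsList A.outputs ∪ outs q := by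
  ext v; simp [outs, or_and_right, exists_or]

lemma outs_perm {q q' : List MAtom} (h : q.Perm q') : outs q = outs q' := by
  ext v
  simp only [outs, Set.mem_setOf_eq]
  constructor <;> rintro ⟨A, hA, hv⟩
  · exact ⟨A, h.mem_iff.1 hA, hv⟩
  · exact ⟨A, h.mem_iff.2 hA, hv⟩

lemma outs_map (θ : ℕ → Trm) (q : List MAtom) :
    outs (q.map (MAtom.subst θ)) = substVars θ (outs q) := by
  ext w
  constructor
  · rintro ⟨A', hA', hw⟩
    obtain ⟨A, hA, rfl⟩ := List.mem_map.1 hA'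
    rw [show (MAtom.subst θ A).outputs = A.outputs.map (Trm.subst θ) from rfl,
      varsList_map] at hw
    obtain ⟨v, hv, hw⟩ := hw
    exact ⟨v, ⟨A, hA, hv⟩, hw⟩
  · rintro ⟨v, ⟨A, hA, hv⟩, hw⟩
    refine ⟨A.subst θ, List.mem_map.2 ⟨A, hA, rfl⟩, ?_⟩
    rw [show (MAtom.subst θ A).outputs = A.outputs.map (Trm.subst θ) from rfl,
      varsList_map]
    exact ⟨v, hv, hw⟩

/-- Recursive characterization of well-modedness relative to an initial set. -/
def WMa (S : Set ℕ) : List MAtom → Prop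
  | [] => True
  | A :: q => varsList A.inputs ⊆ S ∧ WMa (S ∪ varsList A.outputs) q

lemma WMa_mono : ∀ {q : List MAtom} {S T : Set ℕ}, S ⊆ T → WMa S q → WMa T q
  | [], _, _, _, _ => trivial
  | A :: q, S, T, hST, ⟨h1, h2⟩ =>
    ⟨h1.trans hST, WMa_mono (Set.union_subset_union_left _ hST) h2⟩

lemma WMa_append {q₁ q₂ : List MAtom} {S : Set ℕ} :
    WMa S (q₁ ++ q₂) ↔ WMa S q₁ ∧ WMa (S ∪ outs q₁) q₂ := by
  induction q₁ generalizing S with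
  | nil => simp [WMa, outs_nil]
  | cons A q₁ ih =>
    simp only [List.cons_append, WMa, List.append_eq, ih, outs_cons, and_assoc,
      Set.union_assoc]

lemma WMa_subst (θ : ℕ → Trm) : ∀ {q : List MAtom} {S : Set ℕ},
    WMa S q → WMa (substVars θ S) (q.map (MAtom.subst θ))
  | [], _, _ => trivial
  | A :: q, S, ⟨h1, h2⟩ => by
    refine ⟨?_, ?_⟩
    · rw [show (MAtom.subst θ A).inputs = A.inputs.map (Trm.subst θ) from rfl,
        varsList_map]
      exact substVars_mono θ h1
    · have := WMa_subst θ h2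
      rw [substVars_union] at this
      rw [show (MAtom.subst θ A).outputs = A.outputs.map (Trm.subst θ) from rfl,
        varsList_map]
      exact this

lemma outs_append (l₁ l₂ : List MAtom) : outs (l₁ ++ l₂) = outs l₁ ∪ outs l₂ := by
  induction l₁ with
  | nil => simp [outs_nil]
  | cons A l₁ ih => rw [List.cons_append, outs_cons, outs_cons, ih, Set.union_assoc]

lemma WMa_iff : ∀ (q : List MAtom) (S : Set ℕ),
    WMa S q ↔ ∀ (i : ℕ) (h : i < q.length),
      varsList (q.get ⟨i, h⟩).inputs ⊆
        S ∪ {v | ∃ j : ℕ, ∃ hj : j < q.length, j < i ∧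
              v ∈ varsList (q.get ⟨j, hj⟩).outputs}
  | [], S => by
    constructor
    · intro _ i h; exact absurd h (Nat.not_lt_zero i)
    · intro _; trivial
  | A :: q, S => by
    constructor
    · rintro ⟨h1, h2⟩ i hi
      match i with
      | 0 => exact h1.trans Set.subset_union_left
      | i + 1 =>
        have := (WMa_iff q (S ∪ varsList A.outputs)).1 h2 i (Nat.lt_of_succ_lt_succ hi)
        refine this.trans ?_
        rintro v (⟨hv | hv⟩ | ⟨j, hj, hji, hv⟩)
        · exact Or.inl hv
        · exact Or.inr ⟨0, Nat.succ_pos _, Nat.succ_pos _, hv⟩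
        · exact Or.inr ⟨j + 1, Nat.succ_lt_succ hj, Nat.succ_lt_succ hji, hv⟩
    · intro h
      refine ⟨?_, ?_⟩
      · have := h 0 (Nat.succ_pos _)
        refine this.trans ?_
        rintro v (hv | ⟨j, hj, hji, hv⟩)
        · exact hv
        · exact absurd hji (Nat.not_lt_zero j)
      · refine (WMa_iff q (S ∪ varsList A.outputs)).2 ?_
        intro i hi
        have := h (i + 1) (Nat.succ_lt_succ hi)
        refine this.trans ?_
        rintro v (hv | ⟨j, hj, hji, hv⟩)
        · exact Or.inl (Or.inl hv)
        · match j with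
          | 0 => exact Or.inl (Or.inr hv)
          | j + 1 =>
            exact Or.inr ⟨j, Nat.lt_of_succ_lt_succ hj, Nat.lt_of_succ_lt_succ hji, hv⟩

lemma wellModedQuery_iff (q : List MAtom) : WellModedQuery q ↔ WMa ∅ q := by
  rw [WMa_iff]
  unfold WellModedQuery
  constructor <;> intro h i hi
  · exact (h i hi).trans Set.subset_union_right
  · refine (h i hi).trans ?_
    rintro v (hv | hv)
    · exact absurd hv (Set.notMem_empty v)
    · exact hv

lemma wellModedClause_iff (c : MClause) :
    WellModedClause c ↔ WMa (varsList c.head.inputs) c.body ∧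
      varsList c.head.outputs ⊆ varsList c.head.inputs ∪ outs c.body := by
  unfold WellModedClause
  rw [WMa_iff]
  constructor <;> rintro ⟨h1, h2⟩ <;> exact ⟨fun i hi => h1 i hi, h2⟩

lemma step_preserves {P : Set MClause} (hP : ∀ c ∈ P, PermWellModedClause c)
    {q q' : List MAtom} (hstep : Step P q q') (hq : PermWellModedQuery q) :
    PermWellModedQuery q' := by
  obtain ⟨c, hc, θ, i, h, _, hunif, rfl⟩ := hstep
  obtain ⟨q'', hperm, hwm⟩ := hq
  obtain ⟨body', hbperm, hbwm⟩ := hP c hc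
  set A := q.get ⟨i, h⟩ with hA
  have hAmem : A ∈ q'' := hperm.mem_iff.1 (q.get_mem ⟨i, h⟩)
  obtain ⟨pre, post, rfl⟩ := List.append_of_mem hAmem
  -- the decomposition of q around position i
  have hqdec : q = q.take i ++ A :: q.drop (i + 1) := by
    conv_lhs => rw [← List.take_append_drop i q]
    rw [List.drop_eq_getElem_cons h]
    rfl
  -- permutation between the resolvent and our chosen rearrangement
  have hperm2 : (q.take i ++ c.body ++ q.drop (i + 1)).Perm (pre ++ body' ++ post) := by
    have p1 : (q.take i ++ A :: q.drop (i + 1)).Perm (A :: (q.take i ++ q.drop (i + 1))) :=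
      List.perm_middle
    have p2 : (pre ++ A :: post).Perm (A :: (pre ++ post)) := List.perm_middle
    have h1 : (A :: (q.take i ++ q.drop (i + 1))).Perm (A :: (pre ++ post)) :=
      p1.symm.trans ((hqdec ▸ hperm).trans p2)
    have h2 : (q.take i ++ q.drop (i + 1)).Perm (pre ++ post) := h1.cons_inv
    have p3 : (q.take i ++ (c.body ++ q.drop (i + 1))).Perm
        (c.body ++ (q.take i ++ q.drop (i + 1))) := List.perm_append_comm_assoc _ _ _
    have p4 := hbperm.append h2
    have p5 : (body' ++ (pre ++ post)).Perm (pre ++ (body' ++ post)) :=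
      List.perm_append_comm_assoc _ _ _
    rw [List.append_assoc, List.append_assoc]
    exact (p3.trans p4).trans p5
  refine ⟨(pre ++ body' ++ post).map (MAtom.subst θ), hperm2.map _, ?_⟩
  rw [wellModedQuery_iff]
  -- well-modedness of substituted original query
  rw [wellModedQuery_iff] at hwm
  have hwmθ := WMa_subst θ hwm
  rw [substVars_empty, List.map_append, List.map_cons, WMa_append] at hwmθ
  obtain ⟨hpre, hAin, hpost⟩ := hwmθ
  -- clause conditions after substitution
  rw [wellModedClause_iff] at hbwm
  obtain ⟨hbody, hhead⟩ := hbwm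
  have hbodyθ := WMa_subst θ hbody
  -- unification consequences
  have hin : varsList ((A.subst θ).inputs) = substVars θ (varsList c.head.inputs) := by
    rw [hunif]
    rw [show (MAtom.subst θ c.head).inputs = c.head.inputs.map (Trm.subst θ) from rfl,
      varsList_map]
  have hout : varsList ((A.subst θ).outputs) = substVars θ (varsList c.head.outputs) := by
    rw [hunif]
    rw [show (MAtom.subst θ c.head).outputs = c.head.outputs.map (Trm.subst θ) from rfl,
      varsList_map]
  rw [List.map_append, List.map_append, WMa_append, WMa_append]
  refine ⟨⟨hpre, ?_⟩, ?_⟩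
  · -- body' part
    refine WMa_mono ?_ hbodyθ
    rw [← hin]
    exact hAin
  · -- post part
    refine WMa_mono ?_ hpost
    rw [outs_append]
    apply Set.union_subset
    · exact Set.union_subset_union_right _ Set.subset_union_left
    · rw [hout]
      have hsub : substVars θ (varsList c.head.outputs) ⊆
          substVars θ (varsList c.head.inputs) ∪ substVars θ (outs body') := by
        rw [← substVars_union]
        exact substVars_mono θ hhead
      refine hsub.trans (Set.union_subset ?_ ?_)
      · rw [← hin]
        exact hAin.trans (Set.union_subset_union_right _ Set.subset_union_left)
      · rw [← outs_map]
        exact Set.subset_union_right.trans Set.subset_union_right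

/-- If P and Q are a permutation well moded program and query, then every query in any
SLD-derivation of P and Q is permutation well moded, and consequently every nonempty
such query contains an atom that is ground in its input positions. -/
theorem stmt18 (P : Set MClause) (hP : ∀ c ∈ P, PermWellModedClause c)
    (q q' : List MAtom) (hq : PermWellModedQuery q)
    (hder : Relation.ReflTransGen (Step P) q q') :
    PermWellModedQuery q' ∧ (q' ≠ [] → ∃ A ∈ q', varsList A.inputs = ∅) := by
  have hq' : PermWellModedQuery q' := by
    induction hder with
    | refl => exact hq
    | tail _ hstep ih => exact step_preserves hP hstep ih
  refine ⟨hq', fun hne => ?_⟩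
  obtain ⟨q'', hperm, hwm⟩ := hq'
  rw [wellModedQuery_iff] at hwm
  match q'', hwm, hperm with
  | [], _, hperm => exact absurd (hperm.symm.nil_eq).symm hne
  | B :: rest, ⟨h1, _⟩, hperm =>
    refine ⟨B, hperm.mem_iff.2 List.mem_cons_self, ?_⟩
    exact Set.subset_empty_iff.1 h1
end
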